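/- (Klebanov doubling identity) Suppose X₁ and X₂ are independent ℝ^d-valued random vectors such that |f_{X₁+X₂, X₁−X₂}(t₁,t₂) − f_{X₁+X₂}(t₁) f_{X₁−X₂}(t₂)| ≤ ε for all ‖t₁‖₁ ≤ T, ‖t₂‖₁ ≤ T. Then for each i ∈ {1,2} and all t with ‖t‖₁ ≤ T: |f_i(2t) − f_i(t)² |f_i(t)|²| ≤ 5ε, where f_i is the characteristic function of X_i. -/

import Mathlib

/-!
By independence, the joint characteristic function of `(X₁ + X₂, X₁ - X₂)` at `(t₁, t₂)` is
`f₁(t₁ + t₂) f₂(t₁ - t₂)`, that of `X₁ + X₂` is `f₁ f₂` and that of `X₁ - X₂` is `f₁ f̄₂`.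
The hypothesis at `(s, s)` and at `(s, -s)` then says that `f₁(2s)` is `ε`-close to
`f₁(s)² |f₂(s)|²` and `f₂(2s)` to `f₂(s)² |f₁(s)|²`. For `s = t/2` these two approximants have
the same modulus, so `||f₁(t)| - |f₂(t)|| ≤ 2ε` and `||f₁(t)|² - |f₂(t)|²| ≤ 4ε`; for `s = t`,
swapping `|f₂(t)|²` for `|f₁(t)|²` costs at most `4ε` more.
-/

open MeasureTheory ProbabilityTheory

/-- The characteristic function `f_X(t) = E[exp(i tᵀ X)]`. -/
noncomputable def charFun' {Ω : Type*} [MeasurableSpace Ω] (μ : Measure Ω) {d : ℕ}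
    (X : Ω → EuclideanSpace ℝ (Fin d)) (t : EuclideanSpace ℝ (Fin d)) : ℂ :=
  ∫ ω, Complex.exp (Complex.I * ((inner ℝ t (X ω) : ℝ) : ℂ)) ∂μ

/-- The joint characteristic function `f_{U,V}(t₁,t₂) = E[exp(i t₁ᵀU + i t₂ᵀV)]`. -/
noncomputable def jointCharFun' {Ω : Type*} [MeasurableSpace Ω] (μ : Measure Ω) {d : ℕ}
    (U V : Ω → EuclideanSpace ℝ (Fin d))
    (t₁ t₂ : EuclideanSpace ℝ (Fin d)) : ℂ :=
  ∫ ω, Complex.exp (Complex.I * ((inner ℝ t₁ (U ω) + inner ℝ t₂ (V ω) : ℝ) : ℂ)) ∂μ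

open Complex ComplexConjugate

noncomputable def expInner {d : ℕ} (t x : EuclideanSpace ℝ (Fin d)) : ℂ :=
  exp (I * (inner ℝ t x : ℂ))

section CharFun

variable {Ω : Type*} [MeasurableSpace Ω] {μ : Measure Ω} {d : ℕ}
  {X X₁ X₂ : Ω → EuclideanSpace ℝ (Fin d)}

lemma continuous_expInner (t : EuclideanSpace ℝ (Fin d)) : Continuous (expInner t) := by
  unfold expInner; fun_prop

lemma charFun'_neg (t : EuclideanSpace ℝ (Fin d)) :
    charFun' μ X (-t) = conj (charFun' μ X t) := by
  rw [charFun', charFun', ← integral_conj]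
  congr 1 with ω
  rw [← exp_conj, map_mul, conj_I, conj_ofReal, inner_neg_left, ofReal_neg]
  ring_nf

lemma charFun'_zero [IsProbabilityMeasure μ] : charFun' μ X 0 = 1 := by
  simp [charFun']

lemma norm_charFun'_le_one [IsProbabilityMeasure μ] (t : EuclideanSpace ℝ (Fin d)) :
    ‖charFun' μ X t‖ ≤ 1 := by
  refine (norm_integral_le_of_norm_le_const (C := 1) (.of_forall fun ω => ?_)).trans (by simp)
  rw [mul_comm, norm_exp_ofReal_mul_I]

lemma ProbabilityTheory.IndepFun.integral_expInner_mul_expInner (hind : IndepFun X₁ X₂ μ)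
    (hX₁ : AEMeasurable X₁ μ) (hX₂ : AEMeasurable X₂ μ) (a b : EuclideanSpace ℝ (Fin d)) :
    ∫ ω, expInner a (X₁ ω) * expInner b (X₂ ω) ∂μ = charFun' μ X₁ a * charFun' μ X₂ b :=
  hind.integral_fun_comp_mul_comp hX₁ hX₂ (continuous_expInner a).aestronglyMeasurable
    (continuous_expInner b).aestronglyMeasurable

lemma ProbabilityTheory.IndepFun.jointCharFun'_add_sub (hind : IndepFun X₁ X₂ μ)
    (hX₁ : AEMeasurable X₁ μ) (hX₂ : AEMeasurable X₂ μ) (t₁ t₂ : EuclideanSpace ℝ (Fin d)) :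
    jointCharFun' μ (fun ω => X₁ ω + X₂ ω) (fun ω => X₁ ω - X₂ ω) t₁ t₂
      = charFun' μ X₁ (t₁ + t₂) * charFun' μ X₂ (t₁ - t₂) := by
  rw [← hind.integral_expInner_mul_expInner hX₁ hX₂, jointCharFun']
  congr 1 with ω
  simp only [expInner, ← exp_add, ← mul_add, inner_add_left, inner_sub_left, inner_add_right,
    inner_sub_right, ofReal_add, ofReal_sub]
  ring_nf

lemma ProbabilityTheory.IndepFun.charFun'_add (hind : IndepFun X₁ X₂ μ)
    (hX₁ : AEMeasurable X₁ μ) (hX₂ : AEMeasurable X₂ μ) (t : EuclideanSpace ℝ (Fin d)) :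
    charFun' μ (fun ω => X₁ ω + X₂ ω) t = charFun' μ X₁ t * charFun' μ X₂ t := by
  rw [← hind.integral_expInner_mul_expInner hX₁ hX₂, charFun']
  congr 1 with ω
  simp only [expInner, ← exp_add, ← mul_add, inner_add_right, ofReal_add]

lemma ProbabilityTheory.IndepFun.charFun'_sub (hind : IndepFun X₁ X₂ μ)
    (hX₁ : AEMeasurable X₁ μ) (hX₂ : AEMeasurable X₂ μ) (t : EuclideanSpace ℝ (Fin d)) :
    charFun' μ (fun ω => X₁ ω - X₂ ω) t = charFun' μ X₁ t * conj (charFun' μ X₂ t) := by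
  rw [← charFun'_neg, ← hind.integral_expInner_mul_expInner hX₁ hX₂, charFun']
  congr 1 with ω
  simp only [expInner, ← exp_add, ← mul_add, inner_sub_right, inner_neg_left, ofReal_sub,
    ofReal_neg, ← sub_eq_add_neg]

variable [IsProbabilityMeasure μ]

lemma ProbabilityTheory.IndepFun.norm_charFun'_two_nsmul_sub_le_left (hind : IndepFun X₁ X₂ μ)
    (hX₁ : AEMeasurable X₁ μ) (hX₂ : AEMeasurable X₂ μ) {ε : ℝ} (s : EuclideanSpace ℝ (Fin d))
    (hdep : ‖jointCharFun' μ (fun ω => X₁ ω + X₂ ω) (fun ω => X₁ ω - X₂ ω) s s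
      - charFun' μ (fun ω => X₁ ω + X₂ ω) s * charFun' μ (fun ω => X₁ ω - X₂ ω) s‖ ≤ ε) :
    ‖charFun' μ X₁ (2 • s) - charFun' μ X₁ s ^ 2 * ((‖charFun' μ X₂ s‖ : ℝ) : ℂ) ^ 2‖ ≤ ε := by
  rw [hind.jointCharFun'_add_sub hX₁ hX₂, hind.charFun'_add hX₁ hX₂,
    hind.charFun'_sub hX₁ hX₂, sub_self, charFun'_zero, mul_one] at hdep
  rwa [two_nsmul, ← mul_conj', show ∀ a b : ℂ, a ^ 2 * (b * conj b) = a * b * (a * conj b) by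
    intros; ring]

lemma ProbabilityTheory.IndepFun.norm_charFun'_two_nsmul_sub_le_right (hind : IndepFun X₁ X₂ μ)
    (hX₁ : AEMeasurable X₁ μ) (hX₂ : AEMeasurable X₂ μ) {ε : ℝ} (s : EuclideanSpace ℝ (Fin d))
    (hdep : ‖jointCharFun' μ (fun ω => X₁ ω + X₂ ω) (fun ω => X₁ ω - X₂ ω) s (-s)
      - charFun' μ (fun ω => X₁ ω + X₂ ω) s * charFun' μ (fun ω => X₁ ω - X₂ ω) (-s)‖ ≤ ε) :
    ‖charFun' μ X₂ (2 • s) - charFun' μ X₂ s ^ 2 * ((‖charFun' μ X₁ s‖ : ℝ) : ℂ) ^ 2‖ ≤ ε := by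
  rw [hind.jointCharFun'_add_sub hX₁ hX₂, hind.charFun'_add hX₁ hX₂,
    hind.charFun'_sub hX₁ hX₂, add_neg_cancel, charFun'_zero, one_mul, charFun'_neg,
    charFun'_neg, conj_conj, sub_neg_eq_add] at hdep
  rwa [two_nsmul, ← mul_conj', show ∀ a b : ℂ, b ^ 2 * (a * conj a) = a * b * (conj a * b) by
    intros; ring]

end CharFun

lemma norm_sub_sq_mul_norm_sq_le {F z w u v : ℂ} {ε : ℝ} (hz : ‖z‖ ≤ 1) (hw : ‖w‖ ≤ 1)
    (hF : ‖F - z ^ 2 * ((‖w‖ : ℝ) : ℂ) ^ 2‖ ≤ ε) (hzu : ‖z - u‖ ≤ ε) (hwv : ‖w - v‖ ≤ ε)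
    (huv : ‖u‖ = ‖v‖) :
    ‖F - z ^ 2 * ((‖z‖ : ℝ) : ℂ) ^ 2‖ ≤ 5 * ε := by
  have hzw : |‖w‖ - ‖z‖| ≤ 2 * ε := by
    have := abs_norm_sub_norm_le z u
    have := abs_norm_sub_norm_le w v
    rw [abs_le] at *
    constructor <;> linarith
  have hsq : ‖((‖w‖ : ℝ) : ℂ) ^ 2 - ((‖z‖ : ℝ) : ℂ) ^ 2‖ ≤ 4 * ε := by
    rw [← ofReal_pow, ← ofReal_pow, ← ofReal_sub, norm_real, Real.norm_eq_abs,
      show ‖w‖ ^ 2 - ‖z‖ ^ 2 = (‖w‖ - ‖z‖) * (‖w‖ + ‖z‖) by ring, abs_mul,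
      abs_of_nonneg (add_nonneg (norm_nonneg w) (norm_nonneg z))]
    nlinarith [abs_nonneg (‖w‖ - ‖z‖), norm_nonneg w, norm_nonneg z]
  calc ‖F - z ^ 2 * ((‖z‖ : ℝ) : ℂ) ^ 2‖
      = ‖(F - z ^ 2 * ((‖w‖ : ℝ) : ℂ) ^ 2)
          + z ^ 2 * (((‖w‖ : ℝ) : ℂ) ^ 2 - ((‖z‖ : ℝ) : ℂ) ^ 2)‖ := by ring_nf
    _ ≤ ε + ‖z‖ ^ 2 * (4 * ε) := by
      grw [norm_add_le, norm_mul, norm_pow, hF, hsq]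
    _ ≤ 5 * ε := by
      have hε : 0 ≤ ε := (norm_nonneg _).trans hzu
      nlinarith [pow_le_one₀ (n := 2) (norm_nonneg z) hz]

lemma EuclideanSpace.sum_abs_smul {ι : Type*} [Fintype ι] (c : ℝ) (t : EuclideanSpace ℝ ι) :
    ∑ i, |(c • t) i| = |c| * ∑ i, |t i| := by
  simp [Finset.mul_sum, abs_mul]

theorem klebanov_doubling_general {Ω : Type*} [MeasurableSpace Ω]
    (μ : Measure Ω) [IsProbabilityMeasure μ] {d : ℕ}
    (X₁ X₂ : Ω → EuclideanSpace ℝ (Fin d))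
    (hX₁ : Measurable X₁) (hX₂ : Measurable X₂)
    (hind : IndepFun X₁ X₂ μ)
    (ε T : ℝ)
    (hdep : ∀ t₁ t₂ : EuclideanSpace ℝ (Fin d),
      (∑ i, |t₁ i|) ≤ T → (∑ i, |t₂ i|) ≤ T →
      ‖(jointCharFun' μ (fun ω => X₁ ω + X₂ ω) (fun ω => X₁ ω - X₂ ω) t₁ t₂
          - charFun' μ (fun ω => X₁ ω + X₂ ω) t₁
            * charFun' μ (fun ω => X₁ ω - X₂ ω) t₂)‖ ≤ ε) :
    ∀ t : EuclideanSpace ℝ (Fin d), (∑ i, |t i|) ≤ T →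
      ‖(charFun' μ X₁ (2 • t)
          - charFun' μ X₁ t ^ 2 * ((‖charFun' μ X₁ t‖ : ℝ) : ℂ) ^ 2)‖ ≤ 5 * ε ∧
      ‖(charFun' μ X₂ (2 • t)
          - charFun' μ X₂ t ^ 2 * ((‖charFun' μ X₂ t‖ : ℝ) : ℂ) ^ 2)‖ ≤ 5 * ε := by
  intro t ht
  set s : EuclideanSpace ℝ (Fin d) := (2 : ℝ)⁻¹ • t
  have hst : 2 • s = t := by
    rw [two_nsmul, ← two_smul ℝ, smul_inv_smul₀ two_ne_zero]
  have hs : ∑ i, |s i| ≤ T := by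
    rw [EuclideanSpace.sum_abs_smul, abs_of_pos (by norm_num)]
    linarith [show 0 ≤ ∑ i, |t i| by positivity]
  have hs' : ∑ i, |(-s) i| ≤ T := by simpa using hs
  have hf := hind.norm_charFun'_two_nsmul_sub_le_left hX₁.aemeasurable
    hX₂.aemeasurable s (hdep s s hs hs)
  have hg := hind.norm_charFun'_two_nsmul_sub_le_right hX₁.aemeasurable
    hX₂.aemeasurable s (hdep s (-s) hs hs')
  rw [hst] at hf hg
  have hfg : ‖charFun' μ X₁ s ^ 2 * ((‖charFun' μ X₂ s‖ : ℝ) : ℂ) ^ 2‖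
      = ‖charFun' μ X₂ s ^ 2 * ((‖charFun' μ X₁ s‖ : ℝ) : ℂ) ^ 2‖ := by
    simp only [norm_mul, norm_pow, norm_real, norm_norm, mul_comm]
  have hf₂ := hind.norm_charFun'_two_nsmul_sub_le_left hX₁.aemeasurable
    hX₂.aemeasurable t (hdep t t ht ht)
  have hg₂ := hind.norm_charFun'_two_nsmul_sub_le_right hX₁.aemeasurable
    hX₂.aemeasurable t (hdep t (-t) ht (by simpa using ht))
  exact ⟨norm_sub_sq_mul_norm_sq_le (norm_charFun'_le_one t) (norm_charFun'_le_one t) hf₂ hf hg hfg,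
    norm_sub_sq_mul_norm_sq_le (norm_charFun'_le_one t) (norm_charFun'_le_one t) hg₂ hg hf
      hfg.symm⟩

/-- Klebanov's doubling identity: if `X₁, X₂` are independent and
`X₁+X₂, X₁−X₂` are (ε,T)-dependent (in 1-norm), then
`|f_i(2t) − f_i(t)² |f_i(t)|²| ≤ 5ε` for `‖t‖₁ ≤ T`, `i = 1,2`. -/
theorem klebanov_doubling {Ω : Type*} [MeasurableSpace Ω]
    (μ : Measure Ω) [IsProbabilityMeasure μ] {d : ℕ}
    (X₁ X₂ : Ω → EuclideanSpace ℝ (Fin d))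
    (hX₁ : Measurable X₁) (hX₂ : Measurable X₂)
    (hind : IndepFun X₁ X₂ μ)
    (ε T : ℝ) (hε : 0 ≤ ε) (hT : 0 < T)
    (hdep : ∀ t₁ t₂ : EuclideanSpace ℝ (Fin d),
      (∑ i, |t₁ i|) ≤ T → (∑ i, |t₂ i|) ≤ T →
      ‖(jointCharFun' μ (fun ω => X₁ ω + X₂ ω) (fun ω => X₁ ω - X₂ ω) t₁ t₂
          - charFun' μ (fun ω => X₁ ω + X₂ ω) t₁
            * charFun' μ (fun ω => X₁ ω - X₂ ω) t₂)‖ ≤ ε) :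
    ∀ t : EuclideanSpace ℝ (Fin d), (∑ i, |t i|) ≤ T →
      ‖(charFun' μ X₁ (2 • t)
          - charFun' μ X₁ t ^ 2 * ((‖charFun' μ X₁ t‖ : ℝ) : ℂ) ^ 2)‖ ≤ 5 * ε ∧
      ‖(charFun' μ X₂ (2 • t)
          - charFun' μ X₂ t ^ 2 * ((‖charFun' μ X₂ t‖ : ℝ) : ℂ) ^ 2)‖ ≤ 5 * ε :=
  klebanov_doubling_general μ X₁ X₂ hX₁ hX₂ hind ε T hdep
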